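/- For each j ∈ J and f ∈ H one has v_j Λ_j π_{W_j} f = Σ_{k∈K_j} ⟨f, u_{j,k}⟩ e_{j,k}, Σ_{k∈K_j} |⟨f, u_{j,k}⟩|² ≤ v_j² ‖Λ_j‖² ‖f‖² (so {u_{j,k}}_{k∈K_j} is a Bessel sequence in H), and v_j π_{W_j} Λ_j* g = Σ_{k∈K_j} ⟨g, e_{j,k}⟩ u_{j,k} for every g ∈ H_j. -/

import Mathlib

open scoped InnerProductSpace
open ContinuousLinearMap

/-!
With `A_j := v_j Λ_j π_{W_j}` one has `u_{j,k} = A_j* e_{j,k}`, because `π_{W_j}` is self-adjoint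
and `v_j` is real. Hence `⟪u_{j,k}, f⟫ = ⟪e_{j,k}, A_j f⟫` are the Fourier coefficients of `A_j f`
in the Hilbert basis `e_j`: the expansion of `A_j f` gives the first identity, Bessel's inequality
and `‖A_j f‖ ≤ |v_j| ‖Λ_j‖ ‖f‖` the second, and applying `A_j*` to the expansion of `g` the third.
-/

/-- The orthogonal projection of `H` onto the closed subspace `W j`, as a map `H →L[ℂ] H`. -/
noncomputable def gfProj {H : Type*} [NormedAddCommGroup H] [InnerProductSpace ℂ H]
    {J : Type*} (W : J → Submodule ℂ H) [∀ j, CompleteSpace (W j)] (j : J) : H →L[ℂ] H :=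
  (W j).subtypeL.comp ((W j).orthogonalProjectionOnto)

namespace HilbertBasis

variable {ι 𝕜 E F : Type*} [RCLike 𝕜] [NormedAddCommGroup E] [InnerProductSpace 𝕜 E]
  [NormedAddCommGroup F] [InnerProductSpace 𝕜 F] (b : HilbertBasis ι 𝕜 F)

theorem hasSum_inner_smul_apply (T : F →L[𝕜] E) (y : F) :
    HasSum (fun i => ⟪b i, y⟫_𝕜 • T (b i)) (T y) := by
  simpa only [map_smul, b.repr_apply_apply] using (b.hasSum_repr y).mapL T

variable [CompleteSpace E] [CompleteSpace F] (A : E →L[𝕜] F) (x : E)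

theorem hasSum_inner_adjoint_smul :
    HasSum (fun i => ⟪adjoint A (b i), x⟫_𝕜 • b i) (A x) := by
  simpa only [adjoint_inner_left, b.repr_apply_apply] using b.hasSum_repr (A x)

theorem summable_norm_inner_adjoint_sq :
    Summable fun i => ‖⟪adjoint A (b i), x⟫_𝕜‖ ^ 2 := by
  simpa only [adjoint_inner_left] using b.orthonormal.inner_products_summable (A x)

theorem tsum_norm_inner_adjoint_sq_le :
    ∑' i, ‖⟪adjoint A (b i), x⟫_𝕜‖ ^ 2 ≤ ‖A x‖ ^ 2 := by
  simpa only [adjoint_inner_left] using b.orthonormal.tsum_inner_products_le (A x)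

end HilbertBasis

section gfProj

variable {H F J : Type*} [NormedAddCommGroup H] [InnerProductSpace ℂ H]
  [NormedAddCommGroup F] [InnerProductSpace ℂ F]
  (W : J → Submodule ℂ H) [∀ j, CompleteSpace (W j)] (j : J)

theorem norm_gfProj_apply_le (x : H) : ‖gfProj W j x‖ ≤ ‖x‖ :=
  (W j).norm_starProjection_apply_le x

theorem adjoint_gfProj [CompleteSpace H] : adjoint (gfProj W j) = gfProj W j :=
  (isSelfAdjoint_starProjection (W j)).adjoint_eq

noncomputable def gfWeightedOp (c : ℝ) (Λ : H →L[ℂ] F) : H →L[ℂ] F :=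
  (c : ℂ) • (Λ ∘L gfProj W j)

variable (c : ℝ) (Λ : H →L[ℂ] F)

theorem gfWeightedOp_apply (x : H) : gfWeightedOp W j c Λ x = c • Λ (gfProj W j x) :=
  Complex.coe_smul _ _

theorem adjoint_gfWeightedOp_apply [CompleteSpace H] [CompleteSpace F] (y : F) :
    adjoint (gfWeightedOp W j c Λ) y = c • gfProj W j (adjoint Λ y) := by
  simp only [gfWeightedOp, map_smulₛₗ adjoint, adjoint_comp, adjoint_gfProj, Complex.conj_ofReal]
  exact Complex.coe_smul _ _

theorem norm_gfWeightedOp_apply_sq_le (x : H) :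
    ‖gfWeightedOp W j c Λ x‖ ^ 2 ≤ c ^ 2 * ‖Λ‖ ^ 2 * ‖x‖ ^ 2 :=
  calc ‖gfWeightedOp W j c Λ x‖ ^ 2 = c ^ 2 * ‖Λ (gfProj W j x)‖ ^ 2 := by
        rw [gfWeightedOp_apply, norm_smul, Real.norm_eq_abs, mul_pow, sq_abs]
    _ ≤ c ^ 2 * (‖Λ‖ * ‖x‖) ^ 2 := by
        gcongr
        exact Λ.le_opNorm_of_le (norm_gfProj_apply_le W j x)
    _ = c ^ 2 * ‖Λ‖ ^ 2 * ‖x‖ ^ 2 := by ring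

end gfProj

theorem gf_induced_sequence_basic_identities_general
    {H : Type*} [NormedAddCommGroup H] [InnerProductSpace ℂ H] [CompleteSpace H]
    {J : Type*}
    {Hs : J → Type*} [∀ j, NormedAddCommGroup (Hs j)] [∀ j, InnerProductSpace ℂ (Hs j)]
    [∀ j, CompleteSpace (Hs j)]
    (W : J → Submodule ℂ H) [∀ j, CompleteSpace (W j)]
    (v : J → ℝ)
    (Λ : ∀ j, H →L[ℂ] Hs j)
    (K : J → Type*)
    (e : ∀ j, HilbertBasis (K j) ℂ (Hs j))
    (u : ∀ j, K j → H)
    (hu : ∀ j k, u j k = v j • gfProj W j (adjoint (Λ j) (e j k))) :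
    (∀ (j : J) (f : H),
        HasSum (fun k : K j => ⟪u j k, f⟫_ℂ • e j k) (v j • Λ j (gfProj W j f))) ∧
    (∀ (j : J) (f : H),
        Summable (fun k : K j => ‖⟪u j k, f⟫_ℂ‖ ^ 2) ∧
        ∑' k : K j, ‖⟪u j k, f⟫_ℂ‖ ^ 2 ≤ (v j) ^ 2 * ‖Λ j‖ ^ 2 * ‖f‖ ^ 2) ∧
    (∀ (j : J) (g : Hs j),
        HasSum (fun k : K j => ⟪e j k, g⟫_ℂ • u j k)
          (v j • gfProj W j (adjoint (Λ j) g))) := by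
  have hu_adjoint j k : u j k = adjoint (gfWeightedOp W j (v j) (Λ j)) (e j k) :=
    (hu j k).trans (adjoint_gfWeightedOp_apply W j _ _ _).symm
  refine ⟨fun j f => ?_, fun j f => ?_, fun j g => ?_⟩
  · rw [← gfWeightedOp_apply]
    simpa only [hu_adjoint] using (e j).hasSum_inner_adjoint_smul _ f
  · simp only [hu_adjoint]
    exact ⟨(e j).summable_norm_inner_adjoint_sq _ f,
      ((e j).tsum_norm_inner_adjoint_sq_le _ f).trans (norm_gfWeightedOp_apply_sq_le W j _ _ f)⟩
  · simpa only [hu_adjoint, adjoint_gfWeightedOp_apply] using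
      (e j).hasSum_inner_smul_apply (adjoint (gfWeightedOp W j (v j) (Λ j))) g

/-- with `u_{j,k} := v_j π_{W_j} Λ_j* e_{j,k}` (the sequence induced by `Λ`),
one has `v_j Λ_j π_{W_j} f = Σ_k ⟨f, u_{j,k}⟩ e_{j,k}`,
`Σ_k |⟨f, u_{j,k}⟩|² ≤ v_j² ‖Λ_j‖² ‖f‖²`, and
`v_j π_{W_j} Λ_j* g = Σ_k ⟨g, e_{j,k}⟩ u_{j,k}` for every `g ∈ H_j`. -/
theorem gf_induced_sequence_basic_identities
    {H : Type*} [NormedAddCommGroup H] [InnerProductSpace ℂ H] [CompleteSpace H]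
    {J : Type*} [Countable J]
    {Hs : J → Type*} [∀ j, NormedAddCommGroup (Hs j)] [∀ j, InnerProductSpace ℂ (Hs j)]
    [∀ j, CompleteSpace (Hs j)]
    (W : J → Submodule ℂ H) [∀ j, CompleteSpace (W j)]
    (v : J → ℝ) (hv : ∀ j, 0 < v j)
    (Λ : ∀ j, H →L[ℂ] Hs j)
    (K : J → Type*) [∀ j, Countable (K j)]
    (e : ∀ j, HilbertBasis (K j) ℂ (Hs j))
    (u : ∀ j, K j → H)
    (hu : ∀ j k, u j k = v j • gfProj W j (adjoint (Λ j) (e j k))) :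
    (∀ (j : J) (f : H),
        HasSum (fun k : K j => ⟪u j k, f⟫_ℂ • e j k) (v j • Λ j (gfProj W j f))) ∧
    (∀ (j : J) (f : H),
        Summable (fun k : K j => ‖⟪u j k, f⟫_ℂ‖ ^ 2) ∧
        ∑' k : K j, ‖⟪u j k, f⟫_ℂ‖ ^ 2 ≤ (v j) ^ 2 * ‖Λ j‖ ^ 2 * ‖f‖ ^ 2) ∧
    (∀ (j : J) (g : Hs j),
        HasSum (fun k : K j => ⟪e j k, g⟫_ℂ • u j k)
          (v j • gfProj W j (adjoint (Λ j) g))) :=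
  gf_induced_sequence_basic_identities_general W v Λ K e u hu
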